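/- arXiv:1010.2926 — 2 statements merged into one kernel-verified Lean document; each statement's English description precedes it below -/
import Mathlib

section
/- Let K be a hexagonal trefoil knot with the Huh–Jeon intersection pattern. Then the line P2 ∩ P5 (intersection of the planes of the triangular disks Δ2 and Δ5) meets K in at least four distinct points, one on each of the edges e12, e23, e45, e56; i.e., it is a quadrisecant of K. -/
noncomputable section

/-- Points of ℝ³. -/
abbrev E3 : Type := Fin 3 → ℝ

/-- A line in ℝ³: the affine span of two distinct points, viewed as a set. -/
def IsLine (L : Set E3) : Prop :=
  ∃ p q : E3, p ≠ q ∧ L = (affineSpan ℝ ({p, q} : Set E3) : Set E3)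

/-- A plane: an affine subspace of dimension 2. -/
def IsPlane (P : AffineSubspace ℝ E3) : Prop :=
  Module.finrank ℝ P.direction = 2

/-- A (combinatorial) hexagon: six vertices in ℝ³, joined cyclically.
Paper vertex `v_i` corresponds to `v (i-1)`, paper edge `e_{i,i+1}` to `edge (i-1)`,
paper disk `Δ_i` to `disk (i-1)`, paper plane `P_i` to `P (i-1)`. -/
structure Hexagon where
  v : Fin 6 → E3

namespace Hexagon

variable (H : Hexagon)

/-- The closed edge from `v i` to `v (i+1)`. -/
def edge (i : Fin 6) : Set E3 := segment ℝ (H.v i) (H.v (i + 1))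

/-- The open edge (interior of the edge) from `v i` to `v (i+1)`. -/
def intEdge (i : Fin 6) : Set E3 := openSegment ℝ (H.v i) (H.v (i + 1))

/-- The hexagonal closed polygonal curve: union of the six edges. -/
def K : Set E3 := ⋃ i, H.edge i

/-- The triangular disk with vertices `v (i-1)`, `v i`, `v (i+1)`. -/
def disk (i : Fin 6) : Set E3 := convexHull ℝ ({H.v (i - 1), H.v i, H.v (i + 1)} : Set E3)

/-- The plane through `v (i-1)`, `v i`, `v (i+1)`. -/
def P (i : Fin 6) : AffineSubspace ℝ E3 :=
  affineSpan ℝ ({H.v (i - 1), H.v i, H.v (i + 1)} : Set E3)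

/-- General position: no three vertices collinear, no four vertices coplanar. -/
def GeneralPosition : Prop :=
  (∀ i j k : Fin 6, i ≠ j → i ≠ k → j ≠ k →
    ¬ Collinear ℝ ({H.v i, H.v j, H.v k} : Set E3)) ∧
  (∀ i j k l : Fin 6, i ≠ j → i ≠ k → i ≠ l → j ≠ k → j ≠ l → k ≠ l →
    ¬ Coplanar ℝ ({H.v i, H.v j, H.v k, H.v l} : Set E3))

/-- The Huh–Jeon intersection pattern: the only nonempty intersections of open edges with
interiors of triangular disks are `int e23 ∩ int Δ5`, `int e23 ∩ int Δ6`, `int e45 ∩ int Δ1`,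
`int e45 ∩ int Δ2`, `int e61 ∩ int Δ3`, `int e61 ∩ int Δ4` (in the paper's labels). -/
def HuhJeon : Prop :=
  ∀ i j : Fin 6, (H.intEdge i ∩ intrinsicInterior ℝ (H.disk j)).Nonempty ↔
    (i, j) ∈ ({(1, 4), (1, 5), (3, 0), (3, 1), (5, 2), (5, 3)} : Set (Fin 6 × Fin 6))

/-- The candidate quadrisecant line `L_{k+1}` of the paper: the intersection of the planes
`P (k+1)` and `P (k+4)` (for `k = 0, 1, 2`).  `QLine 0` is the paper's `L₁ = P₂ ∩ P₅`,
`QLine 1` is `L₂ = P₃ ∩ P₆`, and `QLine 2` is `L₃ = P₄ ∩ P₁`. -/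
def QLine (k : Fin 6) : Set E3 := (H.P (k + 1) : Set E3) ∩ (H.P (k + 4) : Set E3)

end Hexagon

/-- `L` is a quadrisecant of the curve `K`: a line meeting `K` in at least four points. -/
def IsQuadrisecantOf (K L : Set E3) : Prop :=
  IsLine L ∧ ∃ S : Finset E3, S.card = 4 ∧ (S : Set E3) ⊆ K ∩ L

/-- A quadrisecant of the hexagonal knot `H`. -/
def Hexagon.IsQuadrisecant (H : Hexagon) (L : Set E3) : Prop :=
  IsQuadrisecantOf H.K L

/-- A standard parametrization of the trefoil knot. -/
def trefoilCurve (t : ℝ) : E3 :=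
  ![Real.sin t + 2 * Real.sin (2 * t), Real.cos t - 2 * Real.cos (2 * t), - Real.sin (3 * t)]

/-- The standard trefoil knot as a subset of ℝ³. -/
def TrefoilSet : Set E3 := Set.range trefoilCurve

/-- The standard planar round circle (the unknot). -/
def UnknotSet : Set E3 := {x : E3 | x 0 ^ 2 + x 1 ^ 2 = 1 ∧ x 2 = 0}

/-- Two subsets of ℝ³ are equivalent as knots if there is an ambient isotopy of ℝ³
carrying one onto the other. -/
def KnotEquiv (K₁ K₂ : Set E3) : Prop :=
  ∃ F : ℝ → (E3 ≃ₜ E3), Continuous (fun p : ℝ × E3 => F p.1 p.2) ∧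
    F 0 = Homeomorph.refl E3 ∧ (F 1) '' K₁ = K₂

/-- `K` has the knot type of the trefoil. -/
def IsTrefoil (K : Set E3) : Prop := KnotEquiv K TrefoilSet

/-- `K` is an unknot: it has the knot type of a planar circle. -/
def IsUnknot (K : Set E3) : Prop := KnotEquiv K UnknotSet

/-- The closed polygonal curve with vertices `v 0, …, v (n-1)` joined cyclically. -/
def polyCurve (n : ℕ) [NeZero n] (v : Fin n → E3) : Set E3 :=
  ⋃ i, segment ℝ (v i) (v (i + 1))

/-- `v` determines an embedded (simple) closed polygonal curve: distinct vertices,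
adjacent edges meet exactly at their common vertex, non-adjacent edges are disjoint. -/
def IsSimplePolygon (n : ℕ) [NeZero n] (v : Fin n → E3) : Prop :=
  3 ≤ n ∧ Function.Injective v ∧
  (∀ i : Fin n,
    segment ℝ (v i) (v (i + 1)) ∩ segment ℝ (v (i + 1)) (v (i + 2)) = {v (i + 1)}) ∧
  (∀ i j : Fin n, j ≠ i → j ≠ i + 1 → j + 1 ≠ i →
    segment ℝ (v i) (v (i + 1)) ∩ segment ℝ (v j) (v (j + 1)) = ∅)

namespace Hexagon

/-- The quadrisecant approximation determined by marked points `c i`, `d i` on edge `i`: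
`O i = [c i, d i]` (straightened part of edge `i`) and `N i = [d (i-1), c i]`
(the segment cutting the corner at `v i`). -/
def QA (H : Hexagon) (c d : Fin 6 → E3) : Set E3 :=
  (⋃ i, segment ℝ (c i) (d i)) ∪ (⋃ i, segment ℝ (d (i - 1)) (c i))

/-- `c i`, `d i` are exactly the quadrisecant points on edge `i`, occurring in the
order `v i, c i, d i, v (i+1)` along the edge. -/
def QAData (H : Hexagon) (c d : Fin 6 → E3) : Prop :=
  ∀ i : Fin 6,
    ({c i, d i} : Set E3) = H.edge i ∩ (H.QLine 0 ∪ H.QLine 1 ∪ H.QLine 2) ∧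
    Sbtw ℝ (H.v i) (c i) (d i) ∧ Sbtw ℝ (c i) (d i) (H.v (i + 1))

end Hexagon

/-!
In the paper's labels, `P₂` contains the edges `e12`, `e23` and `P₅` contains `e45`, `e56`.
The pattern pieces `int e23 ∩ int Δ5` and `int e45 ∩ int Δ2` are already points of `P₂ ∩ P₅`
on `e23` and `e45`. The piece `int e45 ∩ int Δ1` is a point `r ∈ P₅` of the triangle
`v6 v1 v2` with `v6 ∈ P₅`, so the segment from `v6` through `r` ends on `e12` inside `P₅`,
and in the interior of `e12` because `v1, v2 ∉ P₅`; symmetrically `int e23 ∩ int Δ6` gives a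
point of `P₂` inside `e56`. General position makes open edges pairwise disjoint, so the four
points are distinct, and two distinct planes through two distinct points meet exactly in the
line through them.
-/

section AffineGeometry

variable {k V P : Type*} [Field k] [AddCommGroup V] [Module k V] [AddTorsor V P]

theorem AffineSubspace.coe_inf_eq_affineSpan_pair {P₁ P₂ : AffineSubspace k P}
    (h₁ : Module.finrank k P₁.direction = 2) (h₂ : Module.finrank k P₂.direction = 2)
    (hne : P₁ ≠ P₂) {p q : P} (hp₁ : p ∈ P₁) (hp₂ : p ∈ P₂) (hq₁ : q ∈ P₁) (hq₂ : q ∈ P₂)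
    (hpq : p ≠ q) : (P₁ : Set P) ∩ P₂ = line[k, p, q] := by
  have : FiniteDimensional k P₁.direction := Module.finite_of_finrank_eq_succ h₁
  have : FiniteDimensional k P₂.direction := Module.finite_of_finrank_eq_succ h₂
  have hinf : (P₁ ⊓ P₂).direction < P₁.direction := by
    rw [AffineSubspace.direction_inf_of_mem hp₁ hp₂]
    refine inf_le_left.lt_of_ne fun h ↦ hne (AffineSubspace.ext_of_direction_eq ?_ ⟨p, hp₁, hp₂⟩)
    exact Submodule.eq_of_le_of_finrank_eq (h ▸ inf_le_right) (h₁.trans h₂.symm)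
  have : FiniteDimensional k (P₁ ⊓ P₂).direction := Submodule.finiteDimensional_of_le hinf.le
  have hline : line[k, p, q] ≤ P₁ ⊓ P₂ :=
    le_inf (affineSpan_pair_le_of_mem_of_mem hp₁ hq₁) (affineSpan_pair_le_of_mem_of_mem hp₂ hq₂)
  have hrank : Module.finrank k (P₁ ⊓ P₂).direction ≤ Module.finrank k line[k, p, q].direction := by
    rw [direction_affineSpan, vectorSpan_pair, finrank_span_singleton (vsub_ne_zero.2 hpq)]
    have := Submodule.finrank_lt_finrank_of_lt hinf
    omega
  have heq : line[k, p, q] = P₁ ⊓ P₂ :=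
    AffineSubspace.ext_of_direction_eq
      (Submodule.eq_of_le_of_finrank_le (AffineSubspace.direction_le hline) hrank)
      ⟨p, left_mem_affineSpan_pair k p q, hp₁, hp₂⟩
  rw [heq]
  rfl

theorem finrank_direction_affineSpan_triple {p₁ p₂ p₃ : P}
    (h : ¬ Collinear k ({p₁, p₂, p₃} : Set P)) :
    Module.finrank k (affineSpan k ({p₁, p₂, p₃} : Set P)).direction = 2 := by
  have := (affineIndependent_iff_not_collinear_set.2 h).finrank_vectorSpan (n := 2) (by simp)
  rwa [Matrix.range_cons, Matrix.range_cons, Matrix.range_cons_empty, Set.singleton_union,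
    Set.singleton_union, ← direction_affineSpan] at this

theorem notMem_affineSpan_triple_of_not_coplanar {p₁ p₂ p₃ p₄ : P}
    (h : ¬ Coplanar k ({p₁, p₂, p₃, p₄} : Set P)) : p₄ ∉ affineSpan k {p₁, p₂, p₃} := by
  intro h₄
  exact h (((coplanar_insert_iff_of_mem_affineSpan h₄).2 (coplanar_triple k _ _ _)).subset
    (by simp [Set.insert_subset_iff]))

end AffineGeometry

section OrderedAffineGeometry

variable {k V : Type*} [Field k] [LinearOrder k] [IsStrictOrderedRing k] [AddCommGroup V]
  [Module k V]

theorem left_mem_affineSpan_pair_of_mem_openSegment {x u v : V} (h : x ∈ openSegment k u v) :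
    u ∈ line[k, x, v] := by
  obtain rfl | hxv := eq_or_ne x v
  · rw [(right_mem_openSegment_iff).1 h]
    exact left_mem_affineSpan_pair k _ _
  · have hcol := (mem_segment_iff_wbtw.1 (openSegment_subset_segment k u v h)).collinear
    exact hcol.mem_affineSpan_of_mem_of_ne (by simp) (by simp) (by simp) hxv

theorem collinear_of_mem_openSegment_of_mem_openSegment {x u v w : V}
    (h₁ : x ∈ openSegment k u v) (h₂ : x ∈ openSegment k v w) : Collinear k ({u, v, w} : Set V) :=
  (collinear_insert_insert_of_mem_affineSpan_pair (left_mem_affineSpan_pair_of_mem_openSegment h₁)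
    (left_mem_affineSpan_pair_of_mem_openSegment (openSegment_symm k v w ▸ h₂))).subset
    (by simp [Set.insert_subset_iff])

theorem coplanar_of_mem_openSegment_of_mem_openSegment {x u v w z : V}
    (h₁ : x ∈ openSegment k u v) (h₂ : x ∈ openSegment k w z) :
    Coplanar k ({u, v, w, z} : Set V) := by
  have hu : u ∈ affineSpan k {x, v, z} := affineSpan_mono k (by simp [Set.insert_subset_iff])
    (left_mem_affineSpan_pair_of_mem_openSegment h₁)
  have hw : w ∈ affineSpan k (insert u {x, v, z}) := affineSpan_mono k
    (by simp [Set.insert_subset_iff]) (left_mem_affineSpan_pair_of_mem_openSegment h₂)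
  have hcop := (coplanar_insert_iff_of_mem_affineSpan hw).2
    ((coplanar_insert_iff_of_mem_affineSpan hu).2 (coplanar_triple k x v z))
  exact hcop.subset (by simp [Set.insert_subset_iff])

theorem AffineSubspace.mem_of_mem_segment {S : AffineSubspace k V} {w z r : V}
    (hr : r ∈ segment k w z) (hw : w ∈ S) (hrS : r ∈ S) (hrw : r ≠ w) : z ∈ S :=
  AffineSubspace.right_mem_of_wbtw (mem_segment_iff_wbtw.1 hr) hw hrS hrw.symm

theorem AffineSubspace.exists_mem_openSegment_of_mem_convexHull {S : AffineSubspace k V}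
    {r w u v : V} (h : r ∈ convexHull k {w, u, v}) (hr : r ∈ S) (hw : w ∈ S) (hrw : r ≠ w)
    (hu : u ∉ S) (hv : v ∉ S) : ∃ z ∈ openSegment k u v, z ∈ S := by
  rw [convexHull_insert (Set.insert_nonempty _ _), convexHull_pair, mem_convexJoin] at h
  obtain ⟨w', rfl, z, hz, hrz⟩ := h
  have hzS : z ∈ S := S.mem_of_mem_segment hrz hw hr hrw
  exact ⟨z, mem_openSegment_of_ne_left_right (ne_of_mem_of_not_mem hzS hu).symm
    (ne_of_mem_of_not_mem hzS hv).symm hz, hzS⟩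

end OrderedAffineGeometry

namespace Hexagon

variable {H : Hexagon}

theorem intEdge_subset_edge (i : Fin 6) : H.intEdge i ⊆ H.edge i :=
  openSegment_subset_segment ℝ _ _

theorem edge_subset_K (i : Fin 6) : H.edge i ⊆ H.K :=
  Set.subset_iUnion H.edge i

theorem edge_subset_P (i : Fin 6) : H.edge i ⊆ H.P i :=
  (H.P i).convex.segment_subset (subset_affineSpan ℝ _ (by simp))
    (subset_affineSpan ℝ _ (by simp))

theorem edge_sub_one_subset_P (i : Fin 6) : H.edge (i - 1) ⊆ H.P i := by
  rw [edge, sub_add_cancel]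
  exact (H.P i).convex.segment_subset (subset_affineSpan ℝ _ (by simp))
    (subset_affineSpan ℝ _ (by simp))

theorem disk_subset_P (i : Fin 6) : H.disk i ⊆ H.P i :=
  convexHull_subset_affineSpan _

namespace GeneralPosition

theorem finrank_direction_P (hgp : H.GeneralPosition) (i : Fin 6) :
    Module.finrank ℝ (H.P i).direction = 2 :=
  finrank_direction_affineSpan_triple <| hgp.1 _ _ _
    (by revert i; decide) (by revert i; decide) (by revert i; decide)

theorem v_notMem_P (hgp : H.GeneralPosition) {i j : Fin 6} (h₁ : i - 1 ≠ j) (h₂ : i ≠ j)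
    (h₃ : i + 1 ≠ j) : H.v j ∉ H.P i := by
  obtain ⟨h₄, h₅, h₆⟩ : i - 1 ≠ i ∧ i - 1 ≠ i + 1 ∧ i ≠ i + 1 := by
    clear h₁ h₂ h₃; revert i; decide
  exact notMem_affineSpan_triple_of_not_coplanar (hgp.2 _ _ _ _ h₄ h₅ h₁ h₆ h₂ h₃)

theorem v_notMem_edge (hgp : H.GeneralPosition) {i j : Fin 6} (h₁ : i ≠ j) (h₂ : j ≠ i + 1) :
    H.v j ∉ H.edge i := fun h ↦
  hgp.1 i j (i + 1) h₁ (by simp) h₂ (mem_segment_iff_wbtw.1 h).collinear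

theorem disjoint_intEdge (hgp : H.GeneralPosition) {i j : Fin 6} (hij : i ≠ j) :
    Disjoint (H.intEdge i) (H.intEdge j) := by
  have hdist : ∀ l : Fin 6, l ≠ l + 1 ∧ l ≠ l + 1 + 1 ∧ l + 1 ≠ l + 1 + 1 := by decide
  rw [Set.disjoint_left]
  intro x hi hj
  by_cases hadj : j = i + 1 ∨ i = j + 1
  · rcases hadj with rfl | rfl
    · obtain ⟨h₁, h₂, h₃⟩ := hdist i
      exact hgp.1 _ _ _ h₁ h₂ h₃ (collinear_of_mem_openSegment_of_mem_openSegment hi hj)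
    · obtain ⟨h₁, h₂, h₃⟩ := hdist j
      exact hgp.1 _ _ _ h₁ h₂ h₃ (collinear_of_mem_openSegment_of_mem_openSegment hj hi)
  · obtain ⟨hji, hij'⟩ := not_or.1 hadj
    exact hgp.2 i (i + 1) j (j + 1) (hdist i).1 hij hij' (Ne.symm hji)
      (fun h ↦ hij (add_right_cancel h)) (hdist j).1
      (coplanar_of_mem_openSegment_of_mem_openSegment hi hj)

theorem isLine_QLine_zero (hgp : H.GeneralPosition) {p q : E3} (hp : p ∈ H.QLine 0)
    (hq : q ∈ H.QLine 0) (hpq : p ≠ q) : IsLine (H.QLine 0) := by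
  have hP : H.P 1 ≠ H.P 4 := fun h ↦
    hgp.v_notMem_P (i := 4) (j := 0) (by decide) (by decide) (by decide)
      (h ▸ H.edge_sub_one_subset_P 1 (left_mem_segment ℝ _ _))
  exact ⟨p, q, hpq, AffineSubspace.coe_inf_eq_affineSpan_pair (hgp.finrank_direction_P 1)
    (hgp.finrank_direction_P 4) hP hp.1 hp.2 hq.1 hq.2 hpq⟩

end GeneralPosition

theorem HuhJeon.exists_mem_intEdge_inter_disk (hhj : H.HuhJeon) {i j : Fin 6}
    (hij : (i, j) ∈ ({(1, 4), (1, 5), (3, 0), (3, 1), (5, 2), (5, 3)} : Set (Fin 6 × Fin 6))) :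
    ∃ x ∈ H.intEdge i, x ∈ H.disk j := by
  obtain ⟨x, hx, hxj⟩ := (hhj i j).2 hij
  exact ⟨x, hx, intrinsicInterior_subset hxj⟩

theorem HuhJeon.exists_mem_intEdge_inter_QLine_zero (hhj : H.HuhJeon)
    (hgp : H.GeneralPosition) {i : Fin 6} (hi : i = 0 ∨ i = 1 ∨ i = 3 ∨ i = 4) :
    ∃ x ∈ H.intEdge i, x ∈ H.QLine 0 := by
  rcases hi with rfl | rfl | rfl | rfl
  · obtain ⟨r, hr, hr0⟩ := hhj.exists_mem_intEdge_inter_disk (i := 3) (j := 0) (by simp)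
    obtain ⟨z, hz, hzP⟩ := (H.P 4).exists_mem_openSegment_of_mem_convexHull hr0
      (H.edge_sub_one_subset_P 4 (H.intEdge_subset_edge 3 hr))
      (H.edge_subset_P 4 (right_mem_segment ℝ _ _))
      (ne_of_mem_of_not_mem (H.intEdge_subset_edge 3 hr)
        (hgp.v_notMem_edge (by decide) (by decide)))
      (hgp.v_notMem_P (by decide) (by decide) (by decide))
      (hgp.v_notMem_P (by decide) (by decide) (by decide))
    exact ⟨z, hz, H.edge_sub_one_subset_P 1 (openSegment_subset_segment ℝ _ _ hz), hzP⟩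
  · obtain ⟨q, hq, hq4⟩ := hhj.exists_mem_intEdge_inter_disk (i := 1) (j := 4) (by simp)
    exact ⟨q, hq, H.edge_subset_P 1 (H.intEdge_subset_edge 1 hq), H.disk_subset_P 4 hq4⟩
  · obtain ⟨p, hp, hp1⟩ := hhj.exists_mem_intEdge_inter_disk (i := 3) (j := 1) (by simp)
    exact ⟨p, hp, H.disk_subset_P 1 hp1, H.edge_sub_one_subset_P 4 (H.intEdge_subset_edge 3 hp)⟩
  · obtain ⟨r, hr, hr5⟩ := hhj.exists_mem_intEdge_inter_disk (i := 1) (j := 5) (by simp)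
    rw [disk, Set.pair_comm, Set.insert_comm] at hr5
    obtain ⟨z, hz, hzP⟩ := (H.P 1).exists_mem_openSegment_of_mem_convexHull hr5
      (H.edge_subset_P 1 (H.intEdge_subset_edge 1 hr))
      (H.edge_sub_one_subset_P 1 (left_mem_segment ℝ _ _))
      (ne_of_mem_of_not_mem (H.intEdge_subset_edge 1 hr)
        (hgp.v_notMem_edge (by decide) (by decide)))
      (hgp.v_notMem_P (by decide) (by decide) (by decide))
      (hgp.v_notMem_P (by decide) (by decide) (by decide))
    exact ⟨z, hz, hzP, H.edge_subset_P 4 (openSegment_subset_segment ℝ _ _ hz)⟩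

end Hexagon

theorem stmt6_general (H : Hexagon) (hgp : H.GeneralPosition) (hhj : H.HuhJeon) :
    IsLine (H.QLine 0) ∧
    (∃ a q p b : E3, a ∈ H.edge 0 ∩ H.QLine 0 ∧ q ∈ H.edge 1 ∩ H.QLine 0 ∧
      p ∈ H.edge 3 ∩ H.QLine 0 ∧ b ∈ H.edge 4 ∩ H.QLine 0 ∧
      a ≠ q ∧ a ≠ p ∧ a ≠ b ∧ q ≠ p ∧ q ≠ b ∧ p ≠ b) ∧
    H.IsQuadrisecant (H.QLine 0) := by
  obtain ⟨a, ha, haL⟩ := hhj.exists_mem_intEdge_inter_QLine_zero hgp (i := 0) (by decide)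
  obtain ⟨q, hq, hqL⟩ := hhj.exists_mem_intEdge_inter_QLine_zero hgp (i := 1) (by decide)
  obtain ⟨p, hp, hpL⟩ := hhj.exists_mem_intEdge_inter_QLine_zero hgp (i := 3) (by decide)
  obtain ⟨b, hb, hbL⟩ := hhj.exists_mem_intEdge_inter_QLine_zero hgp (i := 4) (by decide)
  have hne {i j : Fin 6} {x y : E3} (hij : i ≠ j) (hx : x ∈ H.intEdge i) (hy : y ∈ H.intEdge j) :
      x ≠ y :=
    (hgp.disjoint_intEdge hij).ne_of_mem hx hy
  have haq := hne (by decide) ha hq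
  have hap := hne (by decide) ha hp
  have hab := hne (by decide) ha hb
  have hqp := hne (by decide) hq hp
  have hqb := hne (by decide) hq hb
  have hpb := hne (by decide) hp hb
  have hline := hgp.isLine_QLine_zero hqL hpL hqp
  have hK {i : Fin 6} {x : E3} (hx : x ∈ H.intEdge i) : x ∈ H.K :=
    H.edge_subset_K i (H.intEdge_subset_edge i hx)
  refine ⟨hline, ⟨a, q, p, b, ⟨H.intEdge_subset_edge 0 ha, haL⟩, ⟨H.intEdge_subset_edge 1 hq, hqL⟩,
    ⟨H.intEdge_subset_edge 3 hp, hpL⟩, ⟨H.intEdge_subset_edge 4 hb, hbL⟩,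
    haq, hap, hab, hqp, hqb, hpb⟩, hline, {a, q, p, b},
    Finset.card_eq_four.2 ⟨a, q, p, b, haq, hap, hab, hqp, hqb, hpb, rfl⟩, ?_⟩
  simp only [Finset.coe_insert, Finset.coe_singleton, Set.insert_subset_iff,
    Set.singleton_subset_iff]
  exact ⟨⟨hK ha, haL⟩, ⟨hK hq, hqL⟩, ⟨hK hp, hpL⟩, ⟨hK hb, hbL⟩⟩

/-- For a hexagonal trefoil knot with the Huh–Jeon pattern, `P2 ∩ P5`
(= `QLine 0`) is a line meeting `K` in at least four distinct points, one on each of the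
edges `e12, e23, e45, e56` (edges `0, 1, 3, 4` here); i.e. it is a quadrisecant of `K`. -/
theorem stmt6 (H : Hexagon) (hgp : H.GeneralPosition) (hhj : H.HuhJeon)
    (htre : IsTrefoil H.K) :
    IsLine (H.QLine 0) ∧
    (∃ a q p b : E3, a ∈ H.edge 0 ∩ H.QLine 0 ∧ q ∈ H.edge 1 ∩ H.QLine 0 ∧
      p ∈ H.edge 3 ∩ H.QLine 0 ∧ b ∈ H.edge 4 ∩ H.QLine 0 ∧
      a ≠ q ∧ a ≠ p ∧ a ≠ b ∧ q ≠ p ∧ q ≠ b ∧ p ≠ b) ∧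
    H.IsQuadrisecant (H.QLine 0) :=
  stmt6_general H hgp hhj
end
end

section
/- Let K be a hexagonal trefoil knot with the Huh–Jeon pattern. With L2 = P3 ∩ P6 the quadrisecant meeting e23, e34, e56, e61, the point p²₂₃ = L2 ∩ e23 lies in the open half-space P5⁻ (the side of the plane P5 containing v3). -/
noncomputable section

/-! With zero-based labels the plane `P5` is `H.P 4 = span {v 3, v 4, v 5}`. The Huh–Jeon
crossings of `e23` through `Δ5` and of `e45` through `Δ1` put `v 1` opposite to `v 2`, and `v 0`
opposite to `v 1`, with respect to `P5`; hence `v 0` and `v 2` lie strictly on the same side.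
The crossing of `e23` through `Δ6` is the only point of `e23` on `P6`, so `x` lies in the
triangle `[v 4, v 5, v 0]`, whose side `[v 4, v 5]` lies in `P5`. In general position `e23`
misses that side, so `x` lies strictly on the side of `v 0`. -/

section Affine

variable {k V P : Type*} [Field k] [AddCommGroup V] [Module k V] [AddTorsor V P]

theorem AffineSubspace.mem_of_collinear_of_ne {s : AffineSubspace k P} {p₁ p₂ p₃ : P}
    (h : Collinear k ({p₁, p₂, p₃} : Set P)) (h₁ : p₁ ∈ s) (h₂ : p₂ ∈ s) (hne : p₁ ≠ p₂) :
    p₃ ∈ s :=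
  affineSpan_pair_le_of_mem_of_mem h₁ h₂ <|
    h.mem_affineSpan_of_mem_of_ne (by simp) (by simp) (by simp) hne

theorem coplanar_of_mem_affineSpan_pair_of_mem_affineSpan_pair {a b c d p : P}
    (hab : p ∈ line[k, a, b]) (hcd : p ∈ line[k, c, d]) :
    Coplanar k ({a, b, c, d} : Set P) := by
  have hsub : ({a, b, c, d} : Set P) ⊆ (line[k, a, b] ⊔ line[k, c, d] : AffineSubspace k P) := by
    have h₁ := le_sup_left (a := line[k, a, b]) (b := line[k, c, d])
    have h₂ := le_sup_right (a := line[k, a, b]) (b := line[k, c, d])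
    simp only [Set.insert_subset_iff, Set.singleton_subset_iff, SetLike.mem_coe]
    exact ⟨h₁ (left_mem_affineSpan_pair k a b), h₁ (right_mem_affineSpan_pair k a b),
      h₂ (left_mem_affineSpan_pair k c d), h₂ (right_mem_affineSpan_pair k c d)⟩
  refine Coplanar.subset hsub ?_
  rw [Coplanar, ← AffineSubspace.direction_eq_vectorSpan,
    AffineSubspace.direction_sup_eq_sup_direction hab hcd, direction_affineSpan,
    direction_affineSpan]
  calc _ ≤ Module.rank k (vectorSpan k {a, b}) + Module.rank k (vectorSpan k {c, d}) :=
        Submodule.rank_add_le_rank_add_rank _ _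
    _ ≤ 1 + 1 := add_le_add (collinear_pair k a b) (collinear_pair k c d)
    _ = 2 := one_add_one_eq_two

variable [PartialOrder k]

theorem Wbtw.eq_of_wbtw_of_mem {s : AffineSubspace k P} {a b x z : P} (hx : Wbtw k a x b)
    (hz : Wbtw k a z b) (hxs : x ∈ s) (hzs : z ∈ s) (ha : a ∉ s) : x = z := by
  by_contra hne
  have hcol : Collinear k ({x, z, a, b} : Set P) :=
    collinear_insert_insert_of_mem_affineSpan_pair hx.mem_affineSpan hz.mem_affineSpan
  exact ha (s.mem_of_collinear_of_ne (hcol.subset (by simp [Set.insert_subset_iff])) hxs hzs hne)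

end Affine

section Convex

variable {k V : Type*} [Field k] [LinearOrder k] [IsStrictOrderedRing k] [AddCommGroup V]
  [Module k V] {s : AffineSubspace k V} {a b c p : V}

theorem exists_mem_segment_of_mem_convexHull_triple (hp : p ∈ convexHull k {a, b, c}) :
    ∃ w ∈ segment k b c, p ∈ segment k a w := by
  simpa [convexHull_insert, convexJoin_singleton_left] using hp

theorem AffineSubspace.sOppSide_of_mem_convexHull_of_ne (hp : p ∈ convexHull k {a, b, c})
    (ha : a ∈ s) (hps : p ∈ s) (hpa : p ≠ a) (hb : b ∉ s) (hc : c ∉ s) : s.SOppSide b c := by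
  obtain ⟨w, hw, hpw⟩ := exists_mem_segment_of_mem_convexHull_triple hp
  have hws : w ∈ s :=
    s.mem_of_collinear_of_ne (mem_segment_iff_wbtw.1 hpw).collinear ha hps hpa.symm
  exact ⟨(mem_segment_iff_wbtw.1 hw).wOppSide₁₃ hws, hb, hc⟩

theorem AffineSubspace.sSameSide_or_mem_segment_of_mem_convexHull
    (hp : p ∈ convexHull k {a, b, c}) (hb : b ∈ s) (hc : c ∈ s) (ha : a ∉ s) :
    s.SSameSide p a ∨ p ∈ segment k b c := by
  obtain ⟨w, hw, hpw⟩ := exists_mem_segment_of_mem_convexHull_triple hp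
  have hws : w ∈ s := s.convex.segment_subset hb hc hw
  by_cases hps : p ∈ s
  · right
    rwa [(mem_segment_iff_wbtw.1 hpw).eq_of_wbtw_of_mem (wbtw_self_right k a w) hps hws ha]
  · exact .inl ⟨(mem_segment_iff_wbtw.1 hpw).wSameSide₂₁ hws, hps, ha⟩

end Convex

namespace Hexagon

variable {H : Hexagon}

theorem GeneralPosition.not_collinear (hgp : H.GeneralPosition) {i j l : Fin 6}
    (h : [i, j, l].Nodup) : ¬ Collinear ℝ ({H.v i, H.v j, H.v l} : Set E3) := by
  simp only [List.nodup_cons, List.mem_cons, List.not_mem_nil] at h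
  exact hgp.1 i j l (by tauto) (by tauto) (by tauto)

theorem GeneralPosition.not_coplanar (hgp : H.GeneralPosition) {i j l m : Fin 6}
    (h : [i, j, l, m].Nodup) : ¬ Coplanar ℝ ({H.v i, H.v j, H.v l, H.v m} : Set E3) := by
  simp only [List.nodup_cons, List.mem_cons, List.not_mem_nil] at h
  exact hgp.2 i j l m (by tauto) (by tauto) (by tauto) (by tauto) (by tauto) (by tauto)

theorem GeneralPosition.v_notMem_affineSpan (hgp : H.GeneralPosition) {i j l m : Fin 6}
    (h : [i, j, l, m].Nodup) : H.v i ∉ affineSpan ℝ ({H.v j, H.v l, H.v m} : Set E3) :=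
  fun hi ↦ hgp.not_coplanar h <|
    (coplanar_insert_iff_of_mem_affineSpan hi).2 (coplanar_triple ℝ _ _ _)

theorem v_mem_P (i : Fin 6) : H.v i ∈ H.P i := subset_affineSpan ℝ _ (by simp)

theorem v_sub_one_mem_P (i : Fin 6) : H.v (i - 1) ∈ H.P i := subset_affineSpan ℝ _ (by simp)

theorem v_add_one_mem_P (i : Fin 6) : H.v (i + 1) ∈ H.P i := subset_affineSpan ℝ _ (by simp)

theorem mem_P_of_mem_intrinsicInterior_disk {i : Fin 6} {p : E3}
    (hp : p ∈ intrinsicInterior ℝ (H.disk i)) : p ∈ H.P i :=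
  convexHull_subset_affineSpan _ (intrinsicInterior_subset hp)

theorem wbtw_of_mem_intEdge {i : Fin 6} {p : E3} (hp : p ∈ H.intEdge i) :
    Wbtw ℝ (H.v i) p (H.v (i + 1)) :=
  mem_segment_iff_wbtw.1 (openSegment_subset_segment ℝ _ _ hp)

theorem sOppSide_P4_v1_v2 (hgp : H.GeneralPosition) (hhj : H.HuhJeon) :
    (H.P 4).SOppSide (H.v 1) (H.v 2) := by
  obtain ⟨y, hy, hyΔ⟩ := (hhj 1 4).2 (by simp)
  exact ⟨(wbtw_of_mem_intEdge hy).wOppSide₁₃ (mem_P_of_mem_intrinsicInterior_disk hyΔ),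
    hgp.v_notMem_affineSpan (by decide), hgp.v_notMem_affineSpan (by decide)⟩

theorem sOppSide_P4_v0_v1 (hgp : H.GeneralPosition) (hhj : H.HuhJeon) :
    (H.P 4).SOppSide (H.v 0) (H.v 1) := by
  obtain ⟨q, hq, hqΔ⟩ := (hhj 3 0).2 (by simp)
  have hqP : q ∈ H.P 4 :=
    (H.P 4).convex.segment_subset (v_sub_one_mem_P 4) (v_mem_P 4)
      (mem_segment_iff_wbtw.2 (wbtw_of_mem_intEdge hq))
  have hq5 : q ≠ H.v 5 := by
    rintro rfl
    exact hgp.not_collinear (i := 5) (j := 3) (l := 4) (by decide)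
      (collinear_insert_of_mem_affineSpan_pair (wbtw_of_mem_intEdge hq).mem_affineSpan)
  exact (H.P 4).sOppSide_of_mem_convexHull_of_ne (intrinsicInterior_subset hqΔ)
    (v_add_one_mem_P 4) hqP hq5 (hgp.v_notMem_affineSpan (by decide))
    (hgp.v_notMem_affineSpan (by decide))

theorem mem_disk5_of_mem_edge1_of_mem_P5 (hgp : H.GeneralPosition) (hhj : H.HuhJeon) {x : E3}
    (hx : x ∈ H.edge 1) (hxP : x ∈ H.P 5) : x ∈ H.disk 5 := by
  obtain ⟨z, hz, hzΔ⟩ := (hhj 1 5).2 (by simp)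
  rw [(mem_segment_iff_wbtw.1 hx).eq_of_wbtw_of_mem (wbtw_of_mem_intEdge hz) hxP
    (mem_P_of_mem_intrinsicInterior_disk hzΔ) (hgp.v_notMem_affineSpan (by decide))]
  exact intrinsicInterior_subset hzΔ

theorem sSameSide_P4_v0_of_mem_disk5 (hgp : H.GeneralPosition) {x : E3} (hxΔ : x ∈ H.disk 5)
    (hx : x ∈ H.edge 1) : (H.P 4).SSameSide x (H.v 0) := by
  have hxΔ' : x ∈ convexHull ℝ {H.v 0, H.v 4, H.v 5} := by
    rw [Set.insert_comm, Set.pair_comm]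
    exact hxΔ
  refine ((H.P 4).sSameSide_or_mem_segment_of_mem_convexHull hxΔ' (v_mem_P 4)
    (v_add_one_mem_P 4) (hgp.v_notMem_affineSpan (by decide))).resolve_right fun h45 ↦ ?_
  exact hgp.not_coplanar (i := 1) (j := 2) (l := 4) (m := 5) (by decide)
    (coplanar_of_mem_affineSpan_pair_of_mem_affineSpan_pair
      (mem_segment_iff_wbtw.1 hx).mem_affineSpan (mem_segment_iff_wbtw.1 h45).mem_affineSpan)

end Hexagon

theorem stmt13_general (H : Hexagon) (hgp : H.GeneralPosition) (hhj : H.HuhJeon)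
    (x : E3) (hx : x ∈ H.edge 1 ∩ H.QLine 1) :
    (H.P 4).SSameSide x (H.v 2) := by
  obtain ⟨hx1, -, hxP⟩ := hx
  have hxΔ := Hexagon.mem_disk5_of_mem_edge1_of_mem_P5 hgp hhj hx1 hxP
  exact (Hexagon.sSameSide_P4_v0_of_mem_disk5 hgp hxΔ hx1).trans
    ((Hexagon.sOppSide_P4_v0_v1 hgp hhj).trans (Hexagon.sOppSide_P4_v1_v2 hgp hhj))

/-- With `L2 = P3 ∩ P6` (= `QLine 1`) the quadrisecant meeting
`e23, e34, e56, e61`, the point `p²₂₃ = L2 ∩ e23` lies in the open half-space of `P5`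
containing `v3`.  (Here `e23` is edge `1`, `v3` is `v 2`, `P5` is `P 4`.) -/
theorem stmt13 (H : Hexagon) (hgp : H.GeneralPosition) (hhj : H.HuhJeon)
    (htre : IsTrefoil H.K) (x : E3) (hx : x ∈ H.edge 1 ∩ H.QLine 1) :
    (H.P 4).SSameSide x (H.v 2) :=
  stmt13_general H hgp hhj x hx
end
end
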